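/- arXiv:2509.09857 — 2 statements merged into one kernel-verified Lean document; each statement's English description precedes it below -/
import Mathlib

section
/- Let P^{H_x} and P^{H_y} be tensor-product polynomials of degree at most d in each of the variables ξ = (x-x_c)/Δx, η = (y-y_c)/Δy, ζ = (t-t_c)/Δt, with coefficients c^{H_x}_{k,ℓ,s} and c^{H_y}_{k,ℓ,s}. Then ∂_x P^{H_x} + ∂_y P^{H_y} = 0 identically if and only if: (i) c^{H_x}_{k,ℓ,s} = -(Δx(ℓ+1))/(Δy·k) · c^{H_y}_{k-1,ℓ+1,s} for all 1 ≤ k ≤ d, 0 ≤ ℓ ≤ d-1, 0 ≤ s ≤ d; (ii) c^{H_x}_{k,d,s} = 0 for 1 ≤ k ≤ d, 0 ≤ s ≤ d; and (iii) c^{H_y}_{d,ℓ,s} = 0 for 1 ≤ ℓ ≤ d, 0 ≤ s ≤ d. -/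
/-!
In the scaled variables `ξ, η, ζ` the divergence is again a tensor-product polynomial of degree
at most `d` in each variable; its `(a, b, s)` coefficient is
`(a + 1) / Δx · c^{H_x}_{a+1,b,s} + (b + 1) / Δy · c^{H_y}_{a,b+1,s}`, a term being absent when its
index `a + 1` or `b + 1` exceeds `d`. A polynomial vanishing on all of `ℝ³` has zero coefficients,
and the vanishing of these coefficients is exactly (i)–(iii): the coefficients with `a, b < d` give
(i), those with `b = d` give (ii) and those with `a = d` give (iii).
-/

open Finset

theorem Finset.sum_range_eq_sum_range_ite_succ {M : Type*} [AddCommMonoid M] (n : ℕ) (g : ℕ → M)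
    (hg : g 0 = 0) :
    ∑ k ∈ range n, g k = ∑ a ∈ range n, if a + 1 < n then g (a + 1) else 0 := by
  cases n with
  | zero => simp
  | succ m =>
    rw [sum_range_succ', sum_range_succ, hg, if_neg (lt_irrefl _), add_zero, add_zero]
    exact sum_congr rfl fun a ha => (if_pos (by simpa using ha)).symm

theorem eq_zero_of_forall_sum_mul_pow_eq_zero {R : Type*} [CommRing R] [IsDomain R] [Infinite R]
    {n : ℕ} {f : ℕ → R} (h : ∀ x, ∑ i ∈ range n, f i * x ^ i = 0) {a : ℕ} (ha : a < n) :
    f a = 0 := by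
  have hp : ∑ i ∈ range n, Polynomial.C (f i) * Polynomial.X ^ i = 0 :=
    Polynomial.funext fun x => by simpa [Polynomial.eval_finsetSum] using h x
  simpa [Polynomial.finsetSum_coeff, Polynomial.coeff_C_mul, Polynomial.coeff_X_pow, ha]
    using congrArg (Polynomial.coeff · a) hp

theorem forall_sub_div_iff {K : Type*} [Field K] {p : K → K → K → Prop} (xc yc tc : K)
    {Δx Δy Δt : K} (hx : Δx ≠ 0) (hy : Δy ≠ 0) (ht : Δt ≠ 0) :
    (∀ x y t, p ((x - xc) / Δx) ((y - yc) / Δy) ((t - tc) / Δt)) ↔ ∀ x y t, p x y t :=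
  ⟨fun h x y t => by simpa [hx, hy, ht] using h (xc + Δx * x) (yc + Δy * y) (tc + Δt * t),
    fun h _ _ _ => h _ _ _⟩

theorem inv_mul_mul_add_inv_mul_mul_eq_zero_iff {K : Type*} [Field K] {p q k m u v : K}
    (hp : p ≠ 0) (hq : q ≠ 0) (hk : k ≠ 0) :
    p⁻¹ * (k * u) + q⁻¹ * (m * v) = 0 ↔ u = -(p * m) / (q * k) * v := by
  field_simp
  constructor <;> intro h <;> linear_combination h

namespace TensorPoly

section CommSemiring

variable {R : Type*} [CommSemiring R]

def eval (n : ℕ) (c : ℕ → ℕ → ℕ → R) (x y t : R) : R :=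
  ∑ k ∈ range n, ∑ ℓ ∈ range n, ∑ s ∈ range n, c k ℓ s * x ^ k * y ^ ℓ * t ^ s

def derivFst (n : ℕ) (c : ℕ → ℕ → ℕ → R) (a b s : ℕ) : R :=
  if a + 1 < n then (a + 1 : R) * c (a + 1) b s else 0

def derivSnd (n : ℕ) (c : ℕ → ℕ → ℕ → R) (a b s : ℕ) : R :=
  if b + 1 < n then (b + 1 : R) * c a (b + 1) s else 0

theorem eval_linearComb (n : ℕ) (u v : R) (c c' : ℕ → ℕ → ℕ → R) (x y t : R) :
    eval n (fun a b s => u * c a b s + v * c' a b s) x y t =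
      u * eval n c x y t + v * eval n c' x y t := by
  simp only [eval, mul_sum, ← sum_add_distrib]
  exact sum_congr rfl fun _ _ => sum_congr rfl fun _ _ => sum_congr rfl fun _ _ => by ring

theorem eval_eq_sum_mul_pow (n : ℕ) (c : ℕ → ℕ → ℕ → R) (x y t : R) :
    eval n c x y t =
      ∑ k ∈ range n, (∑ ℓ ∈ range n, (∑ s ∈ range n, c k ℓ s * t ^ s) * y ^ ℓ) * x ^ k := by
  simp only [eval, sum_mul]
  exact sum_congr rfl fun _ _ => sum_congr rfl fun _ _ => sum_congr rfl fun _ _ => by ring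

end CommSemiring

theorem forall_eval_eq_zero_iff {R : Type*} [CommRing R] [IsDomain R] [Infinite R] {n : ℕ}
    {c : ℕ → ℕ → ℕ → R} :
    (∀ x y t, eval n c x y t = 0) ↔ ∀ a b s, a < n → b < n → s < n → c a b s = 0 := by
  refine ⟨fun h a b s ha hb hs => ?_, fun h x y t => ?_⟩
  · simp only [eval_eq_sum_mul_pow] at h
    have hy : ∀ y t, ∑ ℓ ∈ range n, (∑ s ∈ range n, c a ℓ s * t ^ s) * y ^ ℓ = 0 :=
      fun y t => eq_zero_of_forall_sum_mul_pow_eq_zero (fun x => h x y t) ha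
    have ht : ∀ t, ∑ s ∈ range n, c a b s * t ^ s = 0 :=
      fun t => eq_zero_of_forall_sum_mul_pow_eq_zero (fun y => hy y t) hb
    exact eq_zero_of_forall_sum_mul_pow_eq_zero ht hs
  · exact sum_eq_zero fun a ha => sum_eq_zero fun b hb => sum_eq_zero fun s hs => by
      simp [h a b s (mem_range.mp ha) (mem_range.mp hb) (mem_range.mp hs)]

section Deriv

variable {𝕜 : Type*} [NontriviallyNormedField 𝕜]

theorem hasDerivAt_eval_fst (n : ℕ) (c : ℕ → ℕ → ℕ → 𝕜) (x y t : 𝕜) :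
    HasDerivAt (fun x => eval n c x y t) (eval n (derivFst n c) x y t) x := by
  have h := HasDerivAt.fun_sum (u := range n) fun k _ => HasDerivAt.fun_sum (u := range n)
    fun ℓ _ => HasDerivAt.fun_sum (u := range n) fun s _ =>
      (((hasDerivAt_pow k x).const_mul (c k ℓ s)).mul_const (y ^ ℓ)).mul_const (t ^ s)
  refine h.congr_deriv ?_
  rw [sum_range_eq_sum_range_ite_succ n _ (by simp)]
  refine sum_congr rfl fun a _ => ?_
  unfold derivFst
  split_ifs
  · refine sum_congr rfl fun b _ => sum_congr rfl fun s _ => ?_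
    push_cast
    ring
  · simp

theorem hasDerivAt_eval_snd (n : ℕ) (c : ℕ → ℕ → ℕ → 𝕜) (x y t : 𝕜) :
    HasDerivAt (fun y => eval n c x y t) (eval n (derivSnd n c) x y t) y := by
  have h := HasDerivAt.fun_sum (u := range n) fun k _ => HasDerivAt.fun_sum (u := range n)
    fun ℓ _ => HasDerivAt.fun_sum (u := range n) fun s _ =>
      ((hasDerivAt_pow ℓ y).const_mul (c k ℓ s * x ^ k)).mul_const (t ^ s)
  refine h.congr_deriv (sum_congr rfl fun a _ => ?_)
  rw [sum_range_eq_sum_range_ite_succ n _ (by simp)]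
  refine sum_congr rfl fun b _ => ?_
  unfold derivSnd
  split_ifs
  · refine sum_congr rfl fun s _ => ?_
    push_cast
    ring
  · simp

theorem hasDerivAt_eval_sub_div_fst (n : ℕ) (c : ℕ → ℕ → ℕ → 𝕜) (xc Δx x y t : 𝕜) :
    HasDerivAt (fun x => eval n c ((x - xc) / Δx) y t)
      (Δx⁻¹ * eval n (derivFst n c) ((x - xc) / Δx) y t) x :=
  ((hasDerivAt_eval_fst n c _ y t).comp x (((hasDerivAt_id x).sub_const xc).div_const Δx))
    |>.congr_deriv (by simp [mul_comm])

theorem hasDerivAt_eval_sub_div_snd (n : ℕ) (c : ℕ → ℕ → ℕ → 𝕜) (yc Δy x y t : 𝕜) :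
    HasDerivAt (fun y => eval n c x ((y - yc) / Δy) t)
      (Δy⁻¹ * eval n (derivSnd n c) x ((y - yc) / Δy) t) y :=
  ((hasDerivAt_eval_snd n c x _ t).comp y (((hasDerivAt_id y).sub_const yc).div_const Δy))
    |>.congr_deriv (by simp [mul_comm])

end Deriv

theorem divergence_coeff_eq_zero_iff {K : Type*} [Field K] [CharZero K] {d : ℕ} {Δx Δy : K}
    (hΔx : Δx ≠ 0) (hΔy : Δy ≠ 0) {cx cy : ℕ → ℕ → ℕ → K} :
    (∀ a b s, a < d + 1 → b < d + 1 → s < d + 1 →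
        Δx⁻¹ * derivFst (d + 1) cx a b s + Δy⁻¹ * derivSnd (d + 1) cy a b s = 0) ↔
      ((∀ k ℓ s : ℕ, 1 ≤ k → k ≤ d → ℓ < d → s ≤ d →
          cx k ℓ s = -(Δx * (ℓ + 1 : K)) / (Δy * (k : K)) * cy (k - 1) (ℓ + 1) s) ∧
        (∀ k s : ℕ, 1 ≤ k → k ≤ d → s ≤ d → cx k d s = 0) ∧
        (∀ ℓ s : ℕ, 1 ≤ ℓ → ℓ ≤ d → s ≤ d → cy d ℓ s = 0)) := by
  have hsucc (a : ℕ) : ((a : K) + 1) ≠ 0 := Nat.cast_add_one_ne_zero a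
  constructor
  · intro h
    refine ⟨fun k ℓ s hk hkd hℓ hs => ?_, fun k s hk hkd hs => ?_, fun ℓ s hℓ hℓd hs => ?_⟩
    · obtain ⟨a, rfl⟩ := Nat.exists_eq_add_of_le' hk
      have := h a ℓ s (by omega) (by omega) (by omega)
      rw [derivFst, derivSnd, if_pos (by omega), if_pos (by omega)] at this
      rw [Nat.add_sub_cancel, Nat.cast_succ]
      exact (inv_mul_mul_add_inv_mul_mul_eq_zero_iff hΔx hΔy (hsucc a)).1 this
    · obtain ⟨a, rfl⟩ := Nat.exists_eq_add_of_le' hk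
      have := h a d s (by omega) (by omega) (by omega)
      simpa [derivFst, derivSnd, hkd, hΔx, hsucc] using this
    · obtain ⟨b, rfl⟩ := Nat.exists_eq_add_of_le' hℓ
      have := h d b s (by omega) (by omega) (by omega)
      simpa [derivFst, derivSnd, hℓd, hΔy, hsucc] using this
  · rintro ⟨h1, h2, h3⟩ a b s ha hb hs
    rcases Nat.lt_succ_iff_lt_or_eq.1 ha with ha | rfl <;>
      rcases Nat.lt_succ_iff_lt_or_eq.1 hb with hb | rfl
    · rw [derivFst, derivSnd, if_pos (by omega), if_pos (by omega)]
      refine (inv_mul_mul_add_inv_mul_mul_eq_zero_iff hΔx hΔy (hsucc a)).2 ?_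
      simpa using h1 (a + 1) b s (by omega) ha hb (by omega)
    · simp [derivFst, derivSnd, ha, h2 (a + 1) s (by omega) ha (by omega)]
    · simp [derivFst, derivSnd, hb, h3 (b + 1) s (by omega) hb (by omega)]
    · simp [derivFst, derivSnd]

end TensorPoly

open TensorPoly

theorem stmt5_general (d : ℕ) (Δx Δy Δt xc yc tc : ℝ)
    (hΔx : 0 < Δx) (hΔy : 0 < Δy) (hΔt : 0 < Δt)
    (cHx cHy : ℕ → ℕ → ℕ → ℝ)
    (PHx PHy : ℝ → ℝ → ℝ → ℝ)
    (hPHx : ∀ x y t, PHx x y t =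
      ∑ k ∈ range (d + 1), ∑ ℓ ∈ range (d + 1), ∑ s ∈ range (d + 1),
        cHx k ℓ s * ((x - xc) / Δx) ^ k * ((y - yc) / Δy) ^ ℓ * ((t - tc) / Δt) ^ s)
    (hPHy : ∀ x y t, PHy x y t =
      ∑ k ∈ range (d + 1), ∑ ℓ ∈ range (d + 1), ∑ s ∈ range (d + 1),
        cHy k ℓ s * ((x - xc) / Δx) ^ k * ((y - yc) / Δy) ^ ℓ * ((t - tc) / Δt) ^ s) :
    (∀ x y t : ℝ,
        deriv (fun x' => PHx x' y t) x + deriv (fun y' => PHy x y' t) y = 0)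
      ↔
    ((∀ k ℓ s : ℕ, 1 ≤ k → k ≤ d → ℓ < d → s ≤ d →
        cHx k ℓ s = -(Δx * (ℓ + 1 : ℝ)) / (Δy * (k : ℝ)) * cHy (k - 1) (ℓ + 1) s) ∧
     (∀ k s : ℕ, 1 ≤ k → k ≤ d → s ≤ d → cHx k d s = 0) ∧
     (∀ ℓ s : ℕ, 1 ≤ ℓ → ℓ ≤ d → s ≤ d → cHy d ℓ s = 0)) := by
  have hPHx' (y t : ℝ) : (fun x => PHx x y t) =
      fun x => eval (d + 1) cHx ((x - xc) / Δx) ((y - yc) / Δy) ((t - tc) / Δt) :=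
    funext fun x => hPHx x y t
  have hPHy' (x t : ℝ) : (fun y => PHy x y t) =
      fun y => eval (d + 1) cHy ((x - xc) / Δx) ((y - yc) / Δy) ((t - tc) / Δt) :=
    funext fun y => hPHy x y t
  have hdiv (x y t : ℝ) :
      deriv (fun x' => PHx x' y t) x + deriv (fun y' => PHy x y' t) y =
        eval (d + 1) (fun a b s => Δx⁻¹ * derivFst (d + 1) cHx a b s +
            Δy⁻¹ * derivSnd (d + 1) cHy a b s)
          ((x - xc) / Δx) ((y - yc) / Δy) ((t - tc) / Δt) := by
    rw [hPHx', hPHy', (hasDerivAt_eval_sub_div_fst ..).deriv,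
      (hasDerivAt_eval_sub_div_snd ..).deriv, eval_linearComb]
  simp only [hdiv]
  rw [forall_sub_div_iff (p := fun x y t => eval _ _ x y t = 0) xc yc tc hΔx.ne' hΔy.ne' hΔt.ne',
    forall_eval_eq_zero_iff]
  exact divergence_coeff_eq_zero_iff hΔx.ne' hΔy.ne'

/-- Divergence-free characterization of a pair of tensor-product polynomials:
`∂ₓ P^{H_x} + ∂_y P^{H_y} = 0` identically iff the coefficient relations (i)–(iii) hold. -/
theorem stmt5 (d : ℕ) (hd : 1 ≤ d) (Δx Δy Δt xc yc tc : ℝ)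
    (hΔx : 0 < Δx) (hΔy : 0 < Δy) (hΔt : 0 < Δt)
    (cHx cHy : ℕ → ℕ → ℕ → ℝ)
    (PHx PHy : ℝ → ℝ → ℝ → ℝ)
    (hPHx : ∀ x y t, PHx x y t =
      ∑ k ∈ range (d + 1), ∑ ℓ ∈ range (d + 1), ∑ s ∈ range (d + 1),
        cHx k ℓ s * ((x - xc) / Δx) ^ k * ((y - yc) / Δy) ^ ℓ * ((t - tc) / Δt) ^ s)
    (hPHy : ∀ x y t, PHy x y t =
      ∑ k ∈ range (d + 1), ∑ ℓ ∈ range (d + 1), ∑ s ∈ range (d + 1),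
        cHy k ℓ s * ((x - xc) / Δx) ^ k * ((y - yc) / Δy) ^ ℓ * ((t - tc) / Δt) ^ s) :
    (∀ x y t : ℝ,
        deriv (fun x' => PHx x' y t) x + deriv (fun y' => PHy x y' t) y = 0)
      ↔
    ((∀ k ℓ s : ℕ, 1 ≤ k → k ≤ d → ℓ < d → s ≤ d →
        cHx k ℓ s = -(Δx * (ℓ + 1 : ℝ)) / (Δy * (k : ℝ)) * cHy (k - 1) (ℓ + 1) s) ∧
     (∀ k s : ℕ, 1 ≤ k → k ≤ d → s ≤ d → cHx k d s = 0) ∧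
     (∀ ℓ s : ℕ, 1 ≤ ℓ → ℓ ≤ d → s ≤ d → cHy d ℓ s = 0)) :=
  stmt5_general d Δx Δy Δt xc yc tc hΔx hΔy hΔt cHx cHy PHx PHy hPHx hPHy
end

section
/- The dimension of the space of divergence-free pairs (P^{H_x}, P^{H_y}) of tensor-product polynomials of degree at most d in each of three variables, together with an unconstrained tensor-product polynomial P^{E_z} of degree at most d, equals 2d^3 + 6d^2 + 7d + 3. -/
open Finset

/-- The polynomial function associated with a coefficient array of a tensor-product
polynomial of degree at most `d` in each of the variables `ξ = (x-x_c)/Δx`,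
`η = (y-y_c)/Δy`, `ζ = (t-t_c)/Δt`. -/
noncomputable def tpPoly (d : ℕ) (Δx Δy Δt xc yc tc : ℝ)
    (c : Fin (d + 1) → Fin (d + 1) → Fin (d + 1) → ℝ) : ℝ → ℝ → ℝ → ℝ :=
  fun x y t => ∑ k : Fin (d + 1), ∑ ℓ : Fin (d + 1), ∑ s : Fin (d + 1),
    c k ℓ s * ((x - xc) / Δx) ^ (k : ℕ) * ((y - yc) / Δy) ^ (ℓ : ℕ) * ((t - tc) / Δt) ^ (s : ℕ)

/-!
On coefficient arrays the divergence is a linear map `D`, sending a pair of `(d+1)³` arrays to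
one `(d+1)³` array, and a tensor-product polynomial vanishes identically only if its
coefficients do (Vandermonde), so the divergence-free pairs form `ker D`. Differentiating in `ξ`
reaches every array without `ξ^d`-terms, differentiating in `η` every array without
`η^d`-terms; together they reach exactly the arrays whose `ξ^d η^d ζ^s`-coefficients vanish.
Rank–nullity then gives `dim ker D = 2(d+1)³ - ((d+1)³ - (d+1)) = (d+1)³ + (d+1)`.
-/

section PolyEval

variable {R M N : Type*} [CommSemiring R] [AddCommMonoid M] [Module R M] [AddCommMonoid N]
  [Module R N] {n : ℕ}

def polyEval (u : R) : (Fin n → M) →ₗ[R] M where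
  toFun c := ∑ k : Fin n, u ^ (k : ℕ) • c k
  map_add' c c' := by simp [smul_add, sum_add_distrib]
  map_smul' r c := by simp [smul_sum, smul_comm r]

lemma polyEval_apply (u : R) (c : Fin n → M) :
    polyEval u c = ∑ k : Fin n, u ^ (k : ℕ) • c k :=
  rfl

lemma map_polyEval (f : M →ₗ[R] N) (u : R) (c : Fin n → M) :
    f (polyEval u c) = polyEval u (f ∘ c) := by
  simp [polyEval_apply]

end PolyEval

lemma eq_zero_of_forall_polyEval_eq_zero {K V : Type*} [Field K] [CharZero K] [AddCommGroup V]
    [Module K V] {n : ℕ} {c : Fin n → V} (h : ∀ u : K, polyEval u c = 0) : c = 0 := by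
  have hdual (φ : Module.Dual K V) : φ ∘ c = 0 :=
    Matrix.eq_zero_of_forall_index_sum_mul_pow_eq_zero (f := fun j : Fin n => (j : K))
      (Nat.cast_injective.comp Fin.val_injective) fun j => by
        simpa [polyEval_apply, mul_comm, map_polyEval] using congrArg φ (h j)
  funext k
  exact (Module.forall_dual_apply_eq_zero_iff K (c k)).mp fun φ => congrFun (hdual φ) k

section DerivCoeff

variable (R : Type*) {M N : Type*} [Semiring R] [AddCommMonoid M] [Module R M] [AddCommMonoid N]
  [Module R N] (d : ℕ)

/-- The coefficients of the derivative of `∑ k, u ^ k • c k`. -/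
def derivCoeff : (Fin (d + 1) → M) →ₗ[R] (Fin (d + 1) → M) where
  toFun c := Fin.snoc (fun i : Fin d => ((i : ℕ) + 1) • c i.succ) 0
  map_add' c c' := by
    ext i
    induction i using Fin.lastCases <;> simp [smul_add]
  map_smul' r c := by
    ext i
    induction i using Fin.lastCases <;> simp [smul_comm r]

variable {R d}

@[simp]
lemma derivCoeff_last (c : Fin (d + 1) → M) : derivCoeff R d c (Fin.last d) = 0 := by
  simp [derivCoeff]

@[simp]
lemma derivCoeff_castSucc (c : Fin (d + 1) → M) (i : Fin d) :
    derivCoeff R d c i.castSucc = ((i : ℕ) + 1) • c i.succ := by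
  simp [derivCoeff]

lemma derivCoeff_comp (f : M →ₗ[R] N) (c : Fin (d + 1) → M) :
    derivCoeff R d (f ∘ c) = f ∘ derivCoeff R d c := by
  ext i
  induction i using Fin.lastCases <;> simp

end DerivCoeff

lemma sum_natCast_mul_pow_pred_smul {R M : Type*} [CommSemiring R] [AddCommMonoid M]
    [Module R M] {d : ℕ} (c : Fin (d + 1) → M) (u : R) :
    ∑ k : Fin (d + 1), ((k : ℕ) * u ^ ((k : ℕ) - 1)) • c k = polyEval u (derivCoeff R d c) := by
  rw [Fin.sum_univ_succ, polyEval_apply, Fin.sum_univ_castSucc]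
  simp only [Fin.coe_ofNat_eq_mod, Nat.zero_mod, Nat.cast_zero, zero_tsub, pow_zero, mul_one,
    zero_smul, Fin.val_succ, Nat.cast_add, Nat.cast_one, add_tsub_cancel_right, mul_smul, zero_add,
    Fin.val_castSucc, derivCoeff_castSucc, ← Nat.cast_smul_eq_nsmul R, Fin.val_last,
    derivCoeff_last, smul_zero, add_zero]
  exact sum_congr rfl fun i _ => smul_comm _ _ _

lemma hasDerivAt_polyEval {𝕜 F : Type*} [NontriviallyNormedField 𝕜] [NormedAddCommGroup F]
    [NormedSpace 𝕜 F] {d : ℕ} (c : Fin (d + 1) → F) (u : 𝕜) :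
    HasDerivAt (fun u => polyEval u c) (polyEval u (derivCoeff 𝕜 d c)) u := by
  rw [← sum_natCast_mul_pow_pred_smul]
  show HasDerivAt (fun u => ∑ k : Fin (d + 1), u ^ (k : ℕ) • c k) _ u
  exact HasDerivAt.fun_sum fun (k : Fin (d + 1)) _ => (hasDerivAt_pow (k : ℕ) u).smul_const (c k)

lemma mem_range_derivCoeff {K V : Type*} [Field K] [CharZero K] [AddCommGroup V] [Module K V]
    {d : ℕ} {c : Fin (d + 1) → V} :
    c ∈ LinearMap.range (derivCoeff K d) ↔ c (Fin.last d) = 0 := by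
  refine ⟨fun ⟨a, ha⟩ => ha ▸ derivCoeff_last a, fun hc => ?_⟩
  refine ⟨Fin.cons 0 fun i : Fin d => ((i : ℕ) + 1 : K)⁻¹ • c i.castSucc, funext fun i => ?_⟩
  induction i using Fin.lastCases with
  | last => simp [hc]
  | cast i =>
    rw [derivCoeff_castSucc, Fin.cons_succ, ← Nat.cast_smul_eq_nsmul K, smul_smul, Nat.cast_succ,
      mul_inv_cancel₀ (Nat.cast_add_one_ne_zero _), one_smul]

section Divergence

variable (K : Type*) {V : Type*} [Field K] [AddCommGroup V] [Module K V] (d : ℕ)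

/-- Arrays are indexed by the exponents of the first two variables; `V` holds the coefficients
in the remaining ones. -/
def coeffDivergence (a b : K) :
    (Fin (d + 1) → Fin (d + 1) → V) × (Fin (d + 1) → Fin (d + 1) → V) →ₗ[K]
      (Fin (d + 1) → Fin (d + 1) → V) :=
  a • derivCoeff K d ∘ₗ LinearMap.fst K _ _ +
    b • (derivCoeff K d).compLeft (Fin (d + 1)) ∘ₗ LinearMap.snd K _ _

def topCoeff : (Fin (d + 1) → Fin (d + 1) → V) →ₗ[K] V :=
  LinearMap.proj (Fin.last d) ∘ₗ LinearMap.proj (Fin.last d)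

variable {K d}

lemma coeffDivergence_apply (a b : K)
    (p : (Fin (d + 1) → Fin (d + 1) → V) × (Fin (d + 1) → Fin (d + 1) → V)) :
    coeffDivergence K d a b p = a • derivCoeff K d p.1 + b • fun k => derivCoeff K d (p.2 k) :=
  rfl

lemma range_coeffDivergence [CharZero K] {a b : K} (ha : a ≠ 0) (hb : b ≠ 0) :
    LinearMap.range (coeffDivergence K d a b (V := V)) = LinearMap.ker (topCoeff K d) := by
  apply le_antisymm
  · rintro _ ⟨p, rfl⟩
    simp [topCoeff, coeffDivergence_apply]
  · intro q hq
    have hq : q (Fin.last d) (Fin.last d) = 0 := hq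
    obtain ⟨p₁, hp₁⟩ :=
      (mem_range_derivCoeff (K := K)).mpr (Function.update_self (Fin.last d) 0 q)
    have hrow : ∀ k, ∃ p, derivCoeff K d p =
        (Pi.single (Fin.last d) (q (Fin.last d)) : Fin (d + 1) → Fin (d + 1) → V) k := by
      intro k
      refine (mem_range_derivCoeff (K := K)).mpr ?_
      by_cases hk : k = Fin.last d
      · subst hk
        simpa using hq
      · simp [hk]
    choose p₂ hp₂ using hrow
    refine ⟨(a⁻¹ • p₁, b⁻¹ • p₂), ?_⟩
    ext k l
    by_cases hk : k = Fin.last d <;>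
      simp [coeffDivergence_apply, smul_smul, ha, hb, hp₁, hp₂, hk]

theorem finrank_ker_coeffDivergence [CharZero K] [FiniteDimensional K V] {a b : K}
    (ha : a ≠ 0) (hb : b ≠ 0) :
    Module.finrank K (LinearMap.ker (coeffDivergence K d a b (V := V))) =
      (d + 1) ^ 2 * Module.finrank K V + Module.finrank K V := by
  have hD := LinearMap.finrank_range_add_finrank_ker (coeffDivergence K d a b (V := V))
  have hE := LinearMap.finrank_range_add_finrank_ker (topCoeff K d (V := V))
  have hE_surj : LinearMap.range (topCoeff K d (V := V)) = ⊤ :=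
    LinearMap.range_eq_top.mpr fun v => ⟨fun _ _ => v, rfl⟩
  rw [range_coeffDivergence ha hb] at hD
  rw [hE_surj, finrank_top] at hE
  simp only [Module.finrank_prod, Module.finrank_pi_fintype, sum_const, card_univ,
    Fintype.card_fin, smul_eq_mul] at hD hE
  nlinarith

end Divergence

section TensorProductPolynomial

variable {d : ℕ} {Δx Δy Δt xc yc tc : ℝ}

lemma tpPoly_eq_polyEval (c : Fin (d + 1) → Fin (d + 1) → Fin (d + 1) → ℝ) (x y t : ℝ) :
    tpPoly d Δx Δy Δt xc yc tc c x y t =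
      polyEval ((t - tc) / Δt) (polyEval ((y - yc) / Δy) (polyEval ((x - xc) / Δx) c)) := by
  simp only [tpPoly, polyEval_apply, Finset.sum_apply, Pi.smul_apply, smul_eq_mul, mul_sum]
  conv_rhs => rw [sum_comm]; enter [2, ℓ]; rw [sum_comm]
  conv_rhs => rw [sum_comm]
  exact sum_congr rfl fun k _ => sum_congr rfl fun ℓ _ => sum_congr rfl fun s _ => by ring

lemma hasDerivAt_map_polyEval_affine {M : Type*} [AddCommMonoid M] [Module ℝ M]
    (Λ : M →ₗ[ℝ] ℝ) (c : Fin (d + 1) → M) (x₀ h x : ℝ) :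
    HasDerivAt (fun x => Λ (polyEval ((x - x₀) / h) c))
      (h⁻¹ • Λ (polyEval ((x - x₀) / h) (derivCoeff ℝ d c))) x := by
  have haffine : HasDerivAt (fun x => (x - x₀) / h) h⁻¹ x := by
    simpa [div_eq_mul_inv] using ((hasDerivAt_id x).sub_const x₀).div_const h
  simp only [map_polyEval, ← derivCoeff_comp]
  exact (hasDerivAt_polyEval (Λ ∘ c) _).scomp x haffine

lemma hasDerivAt_tpPoly_fst (c : Fin (d + 1) → Fin (d + 1) → Fin (d + 1) → ℝ) (x y t : ℝ) :
    HasDerivAt (fun x' => tpPoly d Δx Δy Δt xc yc tc c x' y t)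
      (tpPoly d Δx Δy Δt xc yc tc (Δx⁻¹ • derivCoeff ℝ d c) x y t) x := by
  simp only [tpPoly_eq_polyEval, map_smul]
  exact hasDerivAt_map_polyEval_affine
    (polyEval ((t - tc) / Δt) ∘ₗ polyEval ((y - yc) / Δy)) c xc Δx x

lemma hasDerivAt_tpPoly_snd (c : Fin (d + 1) → Fin (d + 1) → Fin (d + 1) → ℝ) (x y t : ℝ) :
    HasDerivAt (fun y' => tpPoly d Δx Δy Δt xc yc tc c x y' t)
      (tpPoly d Δx Δy Δt xc yc tc (Δy⁻¹ • (derivCoeff ℝ d).compLeft _ c) x y t) y := by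
  have hcomm : polyEval ((x - xc) / Δx) ((derivCoeff ℝ d).compLeft _ c) =
      derivCoeff ℝ d (polyEval ((x - xc) / Δx) c) :=
    (map_polyEval (derivCoeff ℝ d) _ c).symm
  simp only [tpPoly_eq_polyEval, map_smul, hcomm]
  exact hasDerivAt_map_polyEval_affine (polyEval ((t - tc) / Δt)) _ yc Δy y

lemma deriv_add_deriv_tpPoly
    (p : (Fin (d + 1) → Fin (d + 1) → Fin (d + 1) → ℝ) ×
      (Fin (d + 1) → Fin (d + 1) → Fin (d + 1) → ℝ)) (x y t : ℝ) :
    deriv (fun x' => tpPoly d Δx Δy Δt xc yc tc p.1 x' y t) x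
        + deriv (fun y' => tpPoly d Δx Δy Δt xc yc tc p.2 x y' t) y
      = tpPoly d Δx Δy Δt xc yc tc (coeffDivergence ℝ d Δx⁻¹ Δy⁻¹ p) x y t := by
  rw [(hasDerivAt_tpPoly_fst p.1 x y t).deriv, (hasDerivAt_tpPoly_snd p.2 x y t).deriv,
    coeffDivergence_apply]
  simp only [tpPoly_eq_polyEval, map_add]
  rfl

lemma forall_tpPoly_eq_zero_iff (hx : Δx ≠ 0) (hy : Δy ≠ 0) (ht : Δt ≠ 0)
    {c : Fin (d + 1) → Fin (d + 1) → Fin (d + 1) → ℝ} :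
    (∀ x y t, tpPoly d Δx Δy Δt xc yc tc c x y t = 0) ↔ c = 0 := by
  refine ⟨fun h => ?_, fun hc x y t => by simp [hc, tpPoly]⟩
  refine eq_zero_of_forall_polyEval_eq_zero fun (u : ℝ) =>
    eq_zero_of_forall_polyEval_eq_zero fun (v : ℝ) =>
      eq_zero_of_forall_polyEval_eq_zero fun (w : ℝ) => ?_
  simpa [tpPoly_eq_polyEval, hx, hy, ht] using h (xc + Δx * u) (yc + Δy * v) (tc + Δt * w)

end TensorProductPolynomial

/-- The dimension of the space of divergence-free pairs `(P^{H_x}, P^{H_y})` of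
tensor-product polynomials of degree at most `d` in each of three variables, plus the
`(d+1)^3` dimensions of an unconstrained polynomial `P^{E_z}`, equals
`2d³ + 6d² + 7d + 3`. -/
theorem stmt6 (d : ℕ) (Δx Δy Δt xc yc tc : ℝ)
    (hΔx : 0 < Δx) (hΔy : 0 < Δy) (hΔt : 0 < Δt)
    (S : Submodule ℝ ((Fin (d + 1) → Fin (d + 1) → Fin (d + 1) → ℝ) ×
                      (Fin (d + 1) → Fin (d + 1) → Fin (d + 1) → ℝ)))
    (hS : ∀ p, p ∈ S ↔ ∀ x y t : ℝ,
        deriv (fun x' => tpPoly d Δx Δy Δt xc yc tc p.1 x' y t) x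
          + deriv (fun y' => tpPoly d Δx Δy Δt xc yc tc p.2 x y' t) y = 0) :
    Module.finrank ℝ S + (d + 1) ^ 3 = 2 * d ^ 3 + 6 * d ^ 2 + 7 * d + 3 := by
  have hS_ker : S = LinearMap.ker (coeffDivergence ℝ d Δx⁻¹ Δy⁻¹) := by
    ext p
    simp only [hS, deriv_add_deriv_tpPoly, LinearMap.mem_ker,
      forall_tpPoly_eq_zero_iff hΔx.ne' hΔy.ne' hΔt.ne']
  rw [hS_ker, finrank_ker_coeffDivergence (inv_ne_zero hΔx.ne') (inv_ne_zero hΔy.ne'),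
    Module.finrank_fin_fun]
  ring
end
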